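/- Fix λ > 0, n ≥ k ≥ 1, an m×n matrix Y, an m×p matrix X with spectral norm ‖X‖₂ ≤ 1, and an integer M ≥ 1. Define T_V(S) = Θ⃗(X′YV + (I − X′X)S; λ), where Θ⃗ applies row-wise the vector soft-thresholding a ↦ a(1 − λ/‖a‖₂)₊ (with 0 ↦ 0). Let (S⁽ʲ⁾, V⁽ʲ⁾) be a sequence in ℝ^{p×k} × 𝕆^{n×k} such that for every j, S⁽ʲ⁺¹⁾ = T_{V⁽ʲ⁾}^{α_j}(S⁽ʲ⁾) for some integer 1 ≤ α_j ≤ M, and V⁽ʲ⁺¹⁾ globally maximizes V ↦ tr((Y′XS⁽ʲ⁺¹⁾)′V) over 𝕆^{n×k}. Then any accumulation point (S*, V*) of the sequence is a coordinatewise minimum point of F, i.e., F(S, V*) ≥ F(S*, V*) for all S ∈ ℝ^{p×k} and F(S*, V) ≥ F(S*, V*) for all V ∈ 𝕆^{n×k}, and F(S⁽ʲ⁾, V⁽ʲ⁾) converges monotonically (nonincreasing) to F(S*, V*) for some coordinatewise minimum point (S*, V*). -/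

import Mathlib

/-!
Both block updates decrease `F`. With `V` fixed, `T_V` is a proximal gradient step of unit length
for the smooth part `S ↦ ½‖Y − XSV′‖²`, whose gradient is `1`-Lipschitz because `‖X‖₂ ≤ 1`; this
gives the sufficient decrease `F(T_V S, V) + ½‖T_V S − S‖² ≤ F(S, V)`. With `S` fixed,
`F(S, V) = const − tr((Y′XS)′V)` on `𝕆^{n×k}`. Hence `F(S⁽ʲ⁾, V⁽ʲ⁾)` decreases to a limit, the
residuals `T_{V⁽ʲ⁾}S⁽ʲ⁾ − S⁽ʲ⁾` tend to `0`, and the iterates stay bounded since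
`λ‖S‖_{2,1} ≤ F`. At an accumulation point `(S*, V*)`, continuity makes `S*` a fixed point of
`T_{V*}`, hence a minimizer of the convex `F(·, V*)`, and `V*` a maximizer of `tr((Y′XS*)′·)`.
-/

open Matrix Finset Filter Topology

noncomputable section

/-- Squared Frobenius norm of a matrix. -/
def frobSq {m n : ℕ} (M : Matrix (Fin m) (Fin n) ℝ) : ℝ := ∑ i, ∑ j, (M i j) ^ 2

/-- Frobenius norm. -/
def frobNorm {m n : ℕ} (M : Matrix (Fin m) (Fin n) ℝ) : ℝ := Real.sqrt (frobSq M)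

/-- Euclidean norm of a vector. -/
def eNorm {n : ℕ} (v : Fin n → ℝ) : ℝ := Real.sqrt (∑ j, (v j) ^ 2)

/-- Sum of the Euclidean norms of the rows, `‖S‖_{2,1}`. -/
def norm21 {p n : ℕ} (B : Matrix (Fin p) (Fin n) ℝ) : ℝ := ∑ i, eNorm (B i)

/-- `V` has orthonormal columns: `V ∈ 𝕆^{n×k}`. -/
def IsOrthCol {n k : ℕ} (V : Matrix (Fin n) (Fin k) ℝ) : Prop := Vᵀ * V = 1

/-- The objective `F(S, V) = ½‖Y − XSV′‖²_F + λ‖S‖_{2,1}`. -/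
def Fobj {m n p k : ℕ} (Y : Matrix (Fin m) (Fin n) ℝ) (X : Matrix (Fin m) (Fin p) ℝ)
    (lam : ℝ) (S : Matrix (Fin p) (Fin k) ℝ) (V : Matrix (Fin n) (Fin k) ℝ) : ℝ :=
  (1 / 2) * frobSq (Y - X * S * Vᵀ) + lam * norm21 S


/-- Row-wise vector soft-thresholding: `Θ⃗(a; λ) = a(1 − λ/‖a‖₂)` if `‖a‖₂ > λ`, else `0`. -/
def vecTheta {k : ℕ} (lam : ℝ) (a : Fin k → ℝ) : Fin k → ℝ :=
  if lam < eNorm a then (1 - lam / eNorm a) • a else 0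

/-- The thresholding map `T_V(S) = Θ⃗(X′YV + (I − X′X)S; λ)`, applied row-wise. -/
def Tmap {m n p k : ℕ} (Y : Matrix (Fin m) (Fin n) ℝ) (X : Matrix (Fin m) (Fin p) ℝ)
    (lam : ℝ) (V : Matrix (Fin n) (Fin k) ℝ) (S : Matrix (Fin p) (Fin k) ℝ) :
    Matrix (Fin p) (Fin k) ℝ :=
  Matrix.of fun i => vecTheta lam ((Xᵀ * Y * V + (1 - Xᵀ * X) * S :
    Matrix (Fin p) (Fin k) ℝ) i)

/-- `(S*, V*)` is a coordinatewise minimum point of `F` on `ℝ^{p×k} × 𝕆^{n×k}`. -/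
def IsCWMin {m n p k : ℕ} (Y : Matrix (Fin m) (Fin n) ℝ) (X : Matrix (Fin m) (Fin p) ℝ)
    (lam : ℝ) (Sstar : Matrix (Fin p) (Fin k) ℝ) (Vstar : Matrix (Fin n) (Fin k) ℝ) : Prop :=
  IsOrthCol Vstar ∧
    (∀ S : Matrix (Fin p) (Fin k) ℝ, Fobj Y X lam Sstar Vstar ≤ Fobj Y X lam S Vstar) ∧
    (∀ V : Matrix (Fin n) (Fin k) ℝ, IsOrthCol V →
      Fobj Y X lam Sstar Vstar ≤ Fobj Y X lam Sstar V)

section FrobeniusInner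

variable {a b c : ℕ}

def frobInner (A B : Matrix (Fin a) (Fin b) ℝ) : ℝ := (Aᵀ * B).trace

theorem frobInner_comm (A B : Matrix (Fin a) (Fin b) ℝ) : frobInner A B = frobInner B A := by
  rw [frobInner, frobInner, ← trace_transpose, transpose_mul, transpose_transpose]

theorem frobInner_sub_left (A B C : Matrix (Fin a) (Fin b) ℝ) :
    frobInner (A - B) C = frobInner A C - frobInner B C := by
  simp only [frobInner, transpose_sub, Matrix.sub_mul, trace_sub]

theorem frobInner_sub_right (A B C : Matrix (Fin a) (Fin b) ℝ) :
    frobInner A (B - C) = frobInner A B - frobInner A C := by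
  simp only [frobInner, Matrix.mul_sub, trace_sub]

theorem frobInner_neg_right (A B : Matrix (Fin a) (Fin b) ℝ) :
    frobInner A (-B) = -frobInner A B := by
  simp only [frobInner, Matrix.mul_neg, trace_neg]

theorem frobInner_add_right (A B C : Matrix (Fin a) (Fin b) ℝ) :
    frobInner A (B + C) = frobInner A B + frobInner A C := by
  simp only [frobInner, Matrix.mul_add, trace_add]

theorem frobInner_mul_left (X : Matrix (Fin c) (Fin a) ℝ) (B : Matrix (Fin a) (Fin b) ℝ)
    (C : Matrix (Fin c) (Fin b) ℝ) : frobInner (X * B) C = frobInner B (Xᵀ * C) := by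
  rw [frobInner, frobInner, transpose_mul, Matrix.mul_assoc]

theorem frobInner_mul_transpose_left (B : Matrix (Fin a) (Fin b) ℝ)
    (V : Matrix (Fin c) (Fin b) ℝ) (C : Matrix (Fin a) (Fin c) ℝ) :
    frobInner (B * Vᵀ) C = frobInner B (C * V) := by
  rw [frobInner, frobInner, transpose_mul, transpose_transpose, Matrix.mul_assoc,
    trace_mul_comm, Matrix.mul_assoc]

theorem frobInner_eq_sum_dotProduct (A B : Matrix (Fin a) (Fin b) ℝ) :
    frobInner A B = ∑ i, A i ⬝ᵥ B i := by
  simp only [frobInner, trace, Matrix.diag, mul_apply, transpose_apply, dotProduct]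
  exact Finset.sum_comm

theorem frobSq_eq_frobInner (A : Matrix (Fin a) (Fin b) ℝ) : frobSq A = frobInner A A := by
  simp only [frobInner_eq_sum_dotProduct, frobSq, dotProduct, sq]

theorem frobSq_nonneg (A : Matrix (Fin a) (Fin b) ℝ) : 0 ≤ frobSq A := by
  unfold frobSq; positivity

theorem frobSq_add (A B : Matrix (Fin a) (Fin b) ℝ) :
    frobSq (A + B) = frobSq A + 2 * frobInner A B + frobSq B := by
  simp only [frobSq_eq_frobInner, frobInner_add_right, frobInner_comm (A + B),
    frobInner_comm B A]
  ring

theorem frobSq_sub (A B : Matrix (Fin a) (Fin b) ℝ) :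
    frobSq (A - B) = frobSq A - 2 * frobInner A B + frobSq B := by
  simp only [frobSq_eq_frobInner, frobInner_sub_left, frobInner_sub_right, frobInner_comm B A]
  ring

theorem frobSq_sub_comm (A B : Matrix (Fin a) (Fin b) ℝ) : frobSq (A - B) = frobSq (B - A) := by
  rw [frobSq_sub, frobSq_sub, frobInner_comm]
  ring

theorem frobSq_eq_zero {A : Matrix (Fin a) (Fin b) ℝ} (h : frobSq A = 0) : A = 0 := by
  ext i j
  rw [frobSq, Finset.sum_eq_zero_iff_of_nonneg fun _ _ => by positivity] at h
  simpa using (Finset.sum_eq_zero_iff_of_nonneg fun _ _ => by positivity).1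
    (h i (Finset.mem_univ _)) j (Finset.mem_univ _)

theorem frobSq_mul_transpose_of_isOrthCol (B : Matrix (Fin a) (Fin b) ℝ)
    {V : Matrix (Fin c) (Fin b) ℝ} (hV : IsOrthCol V) : frobSq (B * Vᵀ) = frobSq B := by
  rw [frobSq_eq_frobInner, frobInner_mul_transpose_left, Matrix.mul_assoc, hV, Matrix.mul_one,
    ← frobSq_eq_frobInner]

end FrobeniusInner

section SoftThreshold

variable {E : Type*} [NormedAddCommGroup E] [InnerProductSpace ℝ E] {lam : ℝ}

def softThreshold (lam : ℝ) (a : E) : E := if lam < ‖a‖ then (1 - lam / ‖a‖) • a else 0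

theorem softThreshold_eq_smul (hlam : 0 < lam) (a : E) :
    softThreshold lam a = (1 - lam / max lam ‖a‖) • a := by
  by_cases h : lam < ‖a‖
  · rw [softThreshold, if_pos h, max_eq_right h.le]
  · rw [softThreshold, if_neg h, max_eq_left (not_lt.1 h), div_self hlam.ne', sub_self, zero_smul]

theorem continuous_softThreshold (hlam : 0 < lam) : Continuous (softThreshold (E := E) lam) := by
  simp_rw [funext (softThreshold_eq_smul (E := E) hlam)]
  refine (continuous_const.sub (continuous_const.div (continuous_const.max continuous_norm)
    fun a => ?_)).smul continuous_id
  exact (hlam.trans_le (le_max_left _ _)).ne'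

/-- The variational inequality characterising `softThreshold lam a` as the proximal point of
`lam • ‖·‖` at `a`. -/
theorem inner_sub_softThreshold_le (hlam : 0 ≤ lam) (a s : E) :
    inner ℝ (s - softThreshold lam a) (a - softThreshold lam a) ≤
      lam * (‖s‖ - ‖softThreshold lam a‖) := by
  by_cases h : lam < ‖a‖
  · have hr : 0 < ‖a‖ := hlam.trans_lt h
    have hc : 0 ≤ 1 - lam / ‖a‖ := by rw [sub_nonneg, div_le_one hr]; exact h.le
    have hsa : lam / ‖a‖ * inner ℝ s a ≤ lam * ‖s‖ :=
      calc lam / ‖a‖ * inner ℝ s a ≤ lam / ‖a‖ * (‖s‖ * ‖a‖) :=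
            mul_le_mul_of_nonneg_left (real_inner_le_norm s a) (div_nonneg hlam hr.le)
        _ = lam * ‖s‖ := by field_simp
    have haa : lam / ‖a‖ * ((1 - lam / ‖a‖) * ‖a‖ ^ 2) = lam * ((1 - lam / ‖a‖) * ‖a‖) := by
      field_simp
    rw [softThreshold, if_pos h, norm_smul, Real.norm_of_nonneg hc,
      show a - (1 - lam / ‖a‖) • a = (lam / ‖a‖) • a by module, inner_smul_right, inner_sub_left,
      inner_smul_left, real_inner_self_eq_norm_sq, conj_trivial]
    linarith
  · rw [softThreshold, if_neg h, sub_zero, sub_zero, norm_zero, sub_zero]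
    calc inner ℝ s a ≤ ‖s‖ * ‖a‖ := real_inner_le_norm s a
      _ ≤ ‖s‖ * lam := mul_le_mul_of_nonneg_left (not_lt.1 h) (norm_nonneg s)
      _ = lam * ‖s‖ := mul_comm _ _

end SoftThreshold

section VecTheta

variable {k : ℕ} {lam : ℝ}

theorem eNorm_eq_norm_toLp (v : Fin k → ℝ) : eNorm v = ‖WithLp.toLp 2 v‖ := by
  simp [eNorm, EuclideanSpace.norm_eq]

theorem vecTheta_eq_softThreshold (lam : ℝ) (a : Fin k → ℝ) :
    vecTheta lam a = (softThreshold lam (WithLp.toLp 2 a)).ofLp := by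
  rw [vecTheta, softThreshold, ← eNorm_eq_norm_toLp]
  split_ifs <;> rfl

theorem continuous_vecTheta (hlam : 0 < lam) : Continuous (vecTheta (k := k) lam) := by
  simp_rw [funext (vecTheta_eq_softThreshold lam)]
  exact (PiLp.continuous_ofLp 2 _).comp
    ((continuous_softThreshold hlam).comp (PiLp.continuous_toLp 2 _))

theorem dotProduct_sub_vecTheta_le (hlam : 0 ≤ lam) (a s : Fin k → ℝ) :
    (s - vecTheta lam a) ⬝ᵥ (a - vecTheta lam a) ≤ lam * (eNorm s - eNorm (vecTheta lam a)) := by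
  have h := inner_sub_softThreshold_le hlam (WithLp.toLp 2 a) (WithLp.toLp 2 s)
  simpa [vecTheta_eq_softThreshold, eNorm_eq_norm_toLp, EuclideanSpace.inner_eq_star_dotProduct,
    dotProduct_comm] using h

end VecTheta

section Objective

variable {m n p k : ℕ} (Y : Matrix (Fin m) (Fin n) ℝ) (X : Matrix (Fin m) (Fin p) ℝ) {lam : ℝ}

/-- `T_V` is a proximal gradient step of unit length for `F(·, V)`: `X′XS − X′YV` is the
gradient of its smooth part at `S`. -/
theorem frobInner_sub_Tmap_le (hlam : 0 ≤ lam) (V : Matrix (Fin n) (Fin k) ℝ)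
    (S S' : Matrix (Fin p) (Fin k) ℝ) :
    frobInner (S' - Tmap Y X lam V S) (S - (Xᵀ * X * S - Xᵀ * Y * V) - Tmap Y X lam V S) ≤
      lam * (norm21 S' - norm21 (Tmap Y X lam V S)) := by
  have hstep : S - (Xᵀ * X * S - Xᵀ * Y * V) = Xᵀ * Y * V + (1 - Xᵀ * X) * S := by
    rw [Matrix.sub_mul, Matrix.one_mul]; abel
  rw [hstep, frobInner_eq_sum_dotProduct, norm21, norm21, ← Finset.sum_sub_distrib, Finset.mul_sum]
  exact Finset.sum_le_sum fun i _ => dotProduct_sub_vecTheta_le hlam _ (S' i)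

theorem frobInner_transpose_mul_mul (S : Matrix (Fin p) (Fin k) ℝ) (V : Matrix (Fin n) (Fin k) ℝ) :
    frobInner (Yᵀ * X * S) V = frobInner (Xᵀ * Y * V) S := by
  rw [Matrix.mul_assoc, Matrix.mul_assoc, frobInner_mul_left Yᵀ, frobInner_mul_left Xᵀ,
    transpose_transpose, transpose_transpose, frobInner_comm]

theorem Fobj_eq_of_isOrthCol {V : Matrix (Fin n) (Fin k) ℝ} (hV : IsOrthCol V)
    (S : Matrix (Fin p) (Fin k) ℝ) :
    Fobj Y X lam S V =
      1 / 2 * frobSq Y - frobInner (Yᵀ * X * S) V + 1 / 2 * frobSq (X * S) + lam * norm21 S := by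
  have hcross : frobInner Y (X * S * Vᵀ) = frobInner (Yᵀ * X * S) V := by
    rw [frobInner_comm, frobInner_mul_transpose_left, Matrix.mul_assoc Yᵀ, frobInner_mul_left Yᵀ,
      transpose_transpose]
  rw [Fobj, frobSq_sub, hcross, frobSq_mul_transpose_of_isOrthCol _ hV]
  ring

theorem Fobj_eq_add_of_isOrthCol {V : Matrix (Fin n) (Fin k) ℝ} (hV : IsOrthCol V)
    (S S' : Matrix (Fin p) (Fin k) ℝ) :
    Fobj Y X lam S' V = Fobj Y X lam S V + frobInner (Xᵀ * X * S - Xᵀ * Y * V) (S' - S) +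
      1 / 2 * frobSq (X * (S' - S)) + lam * (norm21 S' - norm21 S) := by
  have hquad : frobSq (X * S') = frobSq (X * S) + 2 * frobInner (Xᵀ * X * S) (S' - S) +
      frobSq (X * (S' - S)) := by
    rw [← add_sub_cancel S S', Matrix.mul_add, frobSq_add, add_sub_cancel_left, frobInner_comm,
      frobInner_mul_left X, frobInner_comm, Matrix.mul_assoc]
  have hlin : frobInner (Xᵀ * Y * V) S' = frobInner (Xᵀ * Y * V) S +
      frobInner (Xᵀ * Y * V) (S' - S) := by
    rw [frobInner_sub_right]; ring
  rw [Fobj_eq_of_isOrthCol Y X hV, Fobj_eq_of_isOrthCol Y X hV,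
    frobInner_transpose_mul_mul Y X S', frobInner_transpose_mul_mul Y X S, frobInner_sub_left,
    hquad, hlin]
  ring

theorem Fobj_le_of_frobInner_le {S : Matrix (Fin p) (Fin k) ℝ} {V V' : Matrix (Fin n) (Fin k) ℝ}
    (hV : IsOrthCol V) (hV' : IsOrthCol V')
    (h : frobInner (Yᵀ * X * S) V' ≤ frobInner (Yᵀ * X * S) V) :
    Fobj Y X lam S V ≤ Fobj Y X lam S V' := by
  rw [Fobj_eq_of_isOrthCol Y X hV, Fobj_eq_of_isOrthCol Y X hV']
  linarith

theorem frobSq_mul_le (hX : ∀ v : Fin p → ℝ, ∑ i, (X.mulVec v i) ^ 2 ≤ ∑ i, (v i) ^ 2)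
    (D : Matrix (Fin p) (Fin k) ℝ) : frobSq (X * D) ≤ frobSq D := by
  rw [frobSq, frobSq, Finset.sum_comm, Finset.sum_comm (f := fun i j => D i j ^ 2)]
  exact Finset.sum_le_sum fun j _ => by
    simpa [mulVec, dotProduct, mul_apply] using hX fun r => D r j

theorem Fobj_Tmap_add_le (hlam : 0 ≤ lam)
    (hX : ∀ v : Fin p → ℝ, ∑ i, (X.mulVec v i) ^ 2 ≤ ∑ i, (v i) ^ 2)
    {V : Matrix (Fin n) (Fin k) ℝ} (hV : IsOrthCol V) (S : Matrix (Fin p) (Fin k) ℝ) :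
    Fobj Y X lam (Tmap Y X lam V S) V + 1 / 2 * frobSq (Tmap Y X lam V S - S) ≤
      Fobj Y X lam S V := by
  set T := Tmap Y X lam V S
  set G := Xᵀ * X * S - Xᵀ * Y * V
  have hprox := frobInner_sub_Tmap_le Y X hlam V S S
  rw [sub_right_comm, frobInner_sub_right, ← frobSq_eq_frobInner] at hprox
  have hflip : frobInner (S - T) G = -frobInner G (T - S) := by
    rw [frobInner_comm, ← frobInner_neg_right, neg_sub]
  have hsq := frobSq_sub_comm S T
  have hexp := Fobj_eq_add_of_isOrthCol Y X (lam := lam) hV S T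
  have hXD := frobSq_mul_le X hX (T - S)
  linarith

theorem Fobj_le_of_Tmap_eq (hlam : 0 ≤ lam) {V : Matrix (Fin n) (Fin k) ℝ} (hV : IsOrthCol V)
    {S : Matrix (Fin p) (Fin k) ℝ} (hfix : Tmap Y X lam V S = S) (S' : Matrix (Fin p) (Fin k) ℝ) :
    Fobj Y X lam S V ≤ Fobj Y X lam S' V := by
  have hprox := frobInner_sub_Tmap_le Y X hlam V S S'
  rw [hfix, sub_right_comm, sub_self, zero_sub, frobInner_neg_right, frobInner_comm] at hprox
  have hexp := Fobj_eq_add_of_isOrthCol Y X (lam := lam) hV S S'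
  have hquad := frobSq_nonneg (X * (S' - S))
  linarith

theorem Fobj_iterate_Tmap_le (hlam : 0 ≤ lam)
    (hX : ∀ v : Fin p → ℝ, ∑ i, (X.mulVec v i) ^ 2 ≤ ∑ i, (v i) ^ 2)
    {V : Matrix (Fin n) (Fin k) ℝ} (hV : IsOrthCol V) (β : ℕ) (S : Matrix (Fin p) (Fin k) ℝ) :
    Fobj Y X lam ((Tmap Y X lam V)^[β] S) V ≤ Fobj Y X lam S V := by
  induction β generalizing S with
  | zero => rfl
  | succ β ih =>
    rw [Function.iterate_succ_apply]
    have hdecr := Fobj_Tmap_add_le Y X hlam hX hV S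
    have hsq := frobSq_nonneg (Tmap Y X lam V S - S)
    linarith [ih (Tmap Y X lam V S)]

end Objective

section Topology

variable {m n p k : ℕ} (Y : Matrix (Fin m) (Fin n) ℝ) (X : Matrix (Fin m) (Fin p) ℝ) {lam : ℝ}

@[fun_prop]
theorem continuous_eNorm : Continuous (eNorm : (Fin k → ℝ) → ℝ) := by
  unfold eNorm; fun_prop

@[fun_prop]
theorem continuous_frobSq : Continuous (frobSq : Matrix (Fin p) (Fin k) ℝ → ℝ) := by
  unfold frobSq; fun_prop

@[fun_prop]
theorem continuous_norm21 : Continuous (norm21 : Matrix (Fin p) (Fin k) ℝ → ℝ) := by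
  unfold norm21; fun_prop

theorem continuous_Fobj :
    Continuous fun q : Matrix (Fin p) (Fin k) ℝ × Matrix (Fin n) (Fin k) ℝ =>
      Fobj Y X lam q.1 q.2 := by
  unfold Fobj; fun_prop

theorem continuous_Tmap (hlam : 0 < lam) :
    Continuous fun q : Matrix (Fin p) (Fin k) ℝ × Matrix (Fin n) (Fin k) ℝ =>
      Tmap Y X lam q.2 q.1 :=
  continuous_pi fun i => (continuous_vecTheta hlam).comp (by fun_prop)

theorem isClosed_setOf_isOrthCol : IsClosed {V : Matrix (Fin n) (Fin k) ℝ | IsOrthCol V} :=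
  isClosed_eq (by fun_prop) continuous_const

end Topology

section Bounds

variable {m n p k : ℕ} (Y : Matrix (Fin m) (Fin n) ℝ) (X : Matrix (Fin m) (Fin p) ℝ) {lam : ℝ}

theorem norm21_nonneg (S : Matrix (Fin p) (Fin k) ℝ) : 0 ≤ norm21 S := by
  unfold norm21 eNorm; positivity

theorem Fobj_nonneg (hlam : 0 ≤ lam) (S : Matrix (Fin p) (Fin k) ℝ)
    (V : Matrix (Fin n) (Fin k) ℝ) : 0 ≤ Fobj Y X lam S V := by
  have := frobSq_nonneg (Y - X * S * Vᵀ)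
  have := norm21_nonneg S
  unfold Fobj; positivity

theorem lam_mul_norm21_le_Fobj (S : Matrix (Fin p) (Fin k) ℝ) (V : Matrix (Fin n) (Fin k) ℝ) :
    lam * norm21 S ≤ Fobj Y X lam S V := by
  have := frobSq_nonneg (Y - X * S * Vᵀ)
  unfold Fobj; linarith

theorem abs_le_norm21 (S : Matrix (Fin p) (Fin k) ℝ) (i : Fin p) (j : Fin k) :
    |S i j| ≤ norm21 S :=
  calc |S i j| ≤ eNorm (S i) := by
        rw [eNorm_eq_norm_toLp, ← Real.norm_eq_abs]
        exact PiLp.norm_apply_le (WithLp.toLp 2 (S i)) j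
    _ ≤ norm21 S := Finset.single_le_sum (f := fun i => eNorm (S i))
        (fun _ _ => Real.sqrt_nonneg _) (Finset.mem_univ i)

theorem abs_le_one_of_isOrthCol {V : Matrix (Fin n) (Fin k) ℝ} (hV : IsOrthCol V) (i : Fin n)
    (j : Fin k) : |V i j| ≤ 1 := by
  have hcol : ∑ r, V r j ^ 2 = 1 := by
    simpa [mul_apply, sq] using congrFun (congrFun hV j) j
  rw [← sq_le_one_iff_abs_le_one, ← hcol]
  exact Finset.single_le_sum (f := fun r => V r j ^ 2) (fun _ _ => sq_nonneg _) (Finset.mem_univ i)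

theorem isCompact_setOf_abs_le (R : ℝ) :
    IsCompact {A : Matrix (Fin p) (Fin k) ℝ | ∀ i j, |A i j| ≤ R} := by
  have hbox : {A : Matrix (Fin p) (Fin k) ℝ | ∀ i j, |A i j| ≤ R} =
      Set.univ.pi fun _ => Set.univ.pi fun _ => Set.Icc (-R) R := by
    ext A
    exact ⟨fun h i _ j _ => abs_le.1 (h i j), fun h i j => abs_le.2 (h i trivial j trivial)⟩
  rw [hbox]
  exact isCompact_univ_pi fun _ => isCompact_univ_pi fun _ => isCompact_Icc

end Bounds

-- Instance search does not see through the type synonym `Matrix`.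
instance Matrix.firstCountableTopology {ι κ R : Type*} [Countable ι] [Countable κ]
    [TopologicalSpace R] [FirstCountableTopology R] : FirstCountableTopology (Matrix ι κ R) :=
  inferInstanceAs (FirstCountableTopology (ι → κ → R))

/-- The iterates of the inexact alternating minimization `𝒜′`. -/
structure IsAltMinSeq {m n p k : ℕ} (Y : Matrix (Fin m) (Fin n) ℝ)
    (X : Matrix (Fin m) (Fin p) ℝ) (lam : ℝ) (S : ℕ → Matrix (Fin p) (Fin k) ℝ)
    (V : ℕ → Matrix (Fin n) (Fin k) ℝ) : Prop where
  isOrthCol : ∀ j, IsOrthCol (V j)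
  exists_iterate : ∀ j, ∃ α, 1 ≤ α ∧ S (j + 1) = (Tmap Y X lam (V j))^[α] (S j)
  frobInner_le : ∀ j V', IsOrthCol V' →
    frobInner (Yᵀ * X * S (j + 1)) V' ≤ frobInner (Yᵀ * X * S (j + 1)) (V (j + 1))

namespace IsAltMinSeq

variable {m n p k : ℕ} {Y : Matrix (Fin m) (Fin n) ℝ} {X : Matrix (Fin m) (Fin p) ℝ} {lam : ℝ}
  {S : ℕ → Matrix (Fin p) (Fin k) ℝ} {V : ℕ → Matrix (Fin n) (Fin k) ℝ}
  {Sstar : Matrix (Fin p) (Fin k) ℝ} {Vstar : Matrix (Fin n) (Fin k) ℝ} {φ : ℕ → ℕ}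

theorem Fobj_succ_add_le (h : IsAltMinSeq Y X lam S V) (hlam : 0 ≤ lam)
    (hX : ∀ v : Fin p → ℝ, ∑ i, (X.mulVec v i) ^ 2 ≤ ∑ i, (v i) ^ 2) (j : ℕ) :
    Fobj Y X lam (S (j + 1)) (V (j + 1)) + 1 / 2 * frobSq (Tmap Y X lam (V j) (S j) - S j) ≤
      Fobj Y X lam (S j) (V j) := by
  obtain ⟨α, hα, hS⟩ := h.exists_iterate j
  obtain ⟨β, rfl⟩ := Nat.exists_eq_add_of_le' hα
  have hVstep : Fobj Y X lam (S (j + 1)) (V (j + 1)) ≤ Fobj Y X lam (S (j + 1)) (V j) :=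
    Fobj_le_of_frobInner_le Y X (h.isOrthCol _) (h.isOrthCol j) (h.frobInner_le j _ (h.isOrthCol j))
  have hSstep : Fobj Y X lam (S (j + 1)) (V j) ≤ Fobj Y X lam (Tmap Y X lam (V j) (S j)) (V j) := by
    rw [hS, Function.iterate_succ_apply]
    exact Fobj_iterate_Tmap_le Y X hlam hX (h.isOrthCol j) β _
  linarith [Fobj_Tmap_add_le Y X hlam hX (h.isOrthCol j) (S j)]

theorem antitone_Fobj (h : IsAltMinSeq Y X lam S V) (hlam : 0 ≤ lam)
    (hX : ∀ v : Fin p → ℝ, ∑ i, (X.mulVec v i) ^ 2 ≤ ∑ i, (v i) ^ 2) :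
    Antitone fun j => Fobj Y X lam (S j) (V j) :=
  antitone_nat_of_succ_le fun j => by
    linarith [h.Fobj_succ_add_le hlam hX j, frobSq_nonneg (Tmap Y X lam (V j) (S j) - S j)]

theorem tendsto_Fobj_iInf (h : IsAltMinSeq Y X lam S V) (hlam : 0 ≤ lam)
    (hX : ∀ v : Fin p → ℝ, ∑ i, (X.mulVec v i) ^ 2 ≤ ∑ i, (v i) ^ 2) :
    Tendsto (fun j => Fobj Y X lam (S j) (V j)) atTop
      (𝓝 (⨅ j, Fobj Y X lam (S j) (V j))) :=
  tendsto_atTop_ciInf (h.antitone_Fobj hlam hX)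
    ⟨0, by rintro _ ⟨j, rfl⟩; exact Fobj_nonneg Y X hlam _ _⟩

theorem tendsto_frobSq_Tmap_sub (h : IsAltMinSeq Y X lam S V) (hlam : 0 ≤ lam)
    (hX : ∀ v : Fin p → ℝ, ∑ i, (X.mulVec v i) ^ 2 ≤ ∑ i, (v i) ^ 2) :
    Tendsto (fun j => frobSq (Tmap Y X lam (V j) (S j) - S j)) atTop (𝓝 0) := by
  have hF := h.tendsto_Fobj_iInf hlam hX
  have hgap : Tendsto (fun j => 2 * (Fobj Y X lam (S j) (V j) -
      Fobj Y X lam (S (j + 1)) (V (j + 1)))) atTop (𝓝 0) := by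
    simpa using (hF.sub (hF.comp (tendsto_add_atTop_nat 1))).const_mul 2
  exact squeeze_zero (fun j => frobSq_nonneg _)
    (fun j => by linarith [h.Fobj_succ_add_le hlam hX j]) hgap

theorem isOrthCol_of_tendsto (h : IsAltMinSeq Y X lam S V)
    (hconv : Tendsto (fun l => (S (φ l), V (φ l))) atTop (𝓝 (Sstar, Vstar))) :
    IsOrthCol Vstar :=
  isClosed_setOf_isOrthCol.mem_of_tendsto hconv.snd_nhds
    (Eventually.of_forall fun l => h.isOrthCol (φ l))

theorem Tmap_eq_of_tendsto (h : IsAltMinSeq Y X lam S V) (hlam : 0 < lam)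
    (hX : ∀ v : Fin p → ℝ, ∑ i, (X.mulVec v i) ^ 2 ≤ ∑ i, (v i) ^ 2) (hφ : StrictMono φ)
    (hconv : Tendsto (fun l => (S (φ l), V (φ l))) atTop (𝓝 (Sstar, Vstar))) :
    Tmap Y X lam Vstar Sstar = Sstar := by
  have hlim : Tendsto (fun l => frobSq (Tmap Y X lam (V (φ l)) (S (φ l)) - S (φ l))) atTop
      (𝓝 (frobSq (Tmap Y X lam Vstar Sstar - Sstar))) :=
    (continuous_frobSq.tendsto _).comp
      ((((continuous_Tmap Y X hlam).tendsto _).comp hconv).sub hconv.fst_nhds)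
  exact sub_eq_zero.1 (frobSq_eq_zero (tendsto_nhds_unique hlim
    ((h.tendsto_frobSq_Tmap_sub hlam.le hX).comp hφ.tendsto_atTop)))

theorem frobInner_le_of_tendsto (h : IsAltMinSeq Y X lam S V) (hφ : StrictMono φ)
    (hconv : Tendsto (fun l => (S (φ l), V (φ l))) atTop (𝓝 (Sstar, Vstar)))
    {V' : Matrix (Fin n) (Fin k) ℝ} (hV' : IsOrthCol V') :
    frobInner (Yᵀ * X * Sstar) V' ≤ frobInner (Yᵀ * X * Sstar) Vstar := by
  have hcont : Continuous fun q : Matrix (Fin p) (Fin k) ℝ × Matrix (Fin n) (Fin k) ℝ =>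
      (frobInner (Yᵀ * X * q.1) V', frobInner (Yᵀ * X * q.1) q.2) := by
    unfold frobInner; fun_prop
  have hlim := ((hcont.tendsto _).comp hconv)
  refine le_of_tendsto_of_tendsto hlim.fst_nhds hlim.snd_nhds ?_
  filter_upwards [eventually_ge_atTop 1] with l hl
  obtain ⟨j, hj⟩ : ∃ j, φ l = j + 1 := ⟨φ l - 1, by have : l ≤ φ l := hφ.le_apply; omega⟩
  simpa [hj] using h.frobInner_le j V' hV'

theorem isCWMin_of_tendsto (h : IsAltMinSeq Y X lam S V) (hlam : 0 < lam)
    (hX : ∀ v : Fin p → ℝ, ∑ i, (X.mulVec v i) ^ 2 ≤ ∑ i, (v i) ^ 2) (hφ : StrictMono φ)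
    (hconv : Tendsto (fun l => (S (φ l), V (φ l))) atTop (𝓝 (Sstar, Vstar))) :
    IsCWMin Y X lam Sstar Vstar := by
  have hVstar := h.isOrthCol_of_tendsto hconv
  refine ⟨hVstar, Fobj_le_of_Tmap_eq Y X hlam.le hVstar (h.Tmap_eq_of_tendsto hlam hX hφ hconv),
    fun V' hV' => ?_⟩
  exact Fobj_le_of_frobInner_le Y X hVstar hV' (h.frobInner_le_of_tendsto hφ hconv hV')

theorem tendsto_Fobj_of_tendsto (h : IsAltMinSeq Y X lam S V) (hlam : 0 ≤ lam)
    (hX : ∀ v : Fin p → ℝ, ∑ i, (X.mulVec v i) ^ 2 ≤ ∑ i, (v i) ^ 2) (hφ : StrictMono φ)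
    (hconv : Tendsto (fun l => (S (φ l), V (φ l))) atTop (𝓝 (Sstar, Vstar))) :
    Tendsto (fun j => Fobj Y X lam (S j) (V j)) atTop (𝓝 (Fobj Y X lam Sstar Vstar)) := by
  have hF := h.tendsto_Fobj_iInf hlam hX
  have hlim := ((continuous_Fobj Y X (lam := lam)).tendsto (Sstar, Vstar)).comp hconv
  have hφ' : Tendsto φ atTop atTop := hφ.tendsto_atTop
  rw [tendsto_nhds_unique (hF.comp hφ') hlim] at hF
  exact hF

theorem exists_tendsto_subseq (h : IsAltMinSeq Y X lam S V) (hlam : 0 < lam)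
    (hX : ∀ v : Fin p → ℝ, ∑ i, (X.mulVec v i) ^ 2 ≤ ∑ i, (v i) ^ 2) :
    ∃ Sstar Vstar, ∃ φ : ℕ → ℕ, StrictMono φ ∧
      Tendsto (fun l => (S (φ l), V (φ l))) atTop (𝓝 (Sstar, Vstar)) := by
  have hSbound : ∀ j i l, |S j i l| ≤ Fobj Y X lam (S 0) (V 0) / lam := fun j i l => by
    rw [le_div_iff₀ hlam, mul_comm]
    calc lam * |S j i l| ≤ lam * norm21 (S j) :=
          mul_le_mul_of_nonneg_left (abs_le_norm21 _ i l) hlam.le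
      _ ≤ Fobj Y X lam (S j) (V j) := lam_mul_norm21_le_Fobj Y X _ _
      _ ≤ Fobj Y X lam (S 0) (V 0) := h.antitone_Fobj hlam.le hX (Nat.zero_le j)
  obtain ⟨⟨Sstar, Vstar⟩, -, φ, hφ, hconv⟩ :=
    ((isCompact_setOf_abs_le _).prod (isCompact_setOf_abs_le 1)).tendsto_subseq
      (x := fun j => (S j, V j))
      fun j => ⟨hSbound j, abs_le_one_of_isOrthCol (h.isOrthCol j)⟩
  exact ⟨Sstar, Vstar, φ, hφ, hconv⟩

end IsAltMinSeq

theorem stmt7_general {m n p k : ℕ} (lam : ℝ) (hlam : 0 < lam)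
    (Y : Matrix (Fin m) (Fin n) ℝ) (X : Matrix (Fin m) (Fin p) ℝ)
    -- spectral norm `‖X‖₂ ≤ 1`
    (hX : ∀ v : Fin p → ℝ, ∑ i, (X.mulVec v i) ^ 2 ≤ ∑ i, (v i) ^ 2)
    (M : ℕ)
    (S : ℕ → Matrix (Fin p) (Fin k) ℝ) (V : ℕ → Matrix (Fin n) (Fin k) ℝ)
    (hV : ∀ j, IsOrthCol (V j))
    (α : ℕ → ℕ) (hα : ∀ j, 1 ≤ α j ∧ α j ≤ M)
    (hSstep : ∀ j, S (j + 1) = (Tmap Y X lam (V j))^[α j] (S j))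
    (hVmax : ∀ j, ∀ V' : Matrix (Fin n) (Fin k) ℝ, IsOrthCol V' →
      ((Yᵀ * X * S (j + 1))ᵀ * V').trace ≤ ((Yᵀ * X * S (j + 1))ᵀ * V (j + 1)).trace) :
    (∀ (Sstar : Matrix (Fin p) (Fin k) ℝ) (Vstar : Matrix (Fin n) (Fin k) ℝ),
      (∃ φ : ℕ → ℕ, StrictMono φ ∧
        Tendsto (fun l => (S (φ l), V (φ l))) atTop (𝓝 (Sstar, Vstar))) →
      IsCWMin Y X lam Sstar Vstar) ∧
    Antitone (fun j => Fobj Y X lam (S j) (V j)) ∧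
    ∃ (Sstar : Matrix (Fin p) (Fin k) ℝ) (Vstar : Matrix (Fin n) (Fin k) ℝ),
      IsCWMin Y X lam Sstar Vstar ∧
      Tendsto (fun j => Fobj Y X lam (S j) (V j)) atTop (𝓝 (Fobj Y X lam Sstar Vstar)) := by
  have h : IsAltMinSeq Y X lam S V := ⟨hV, fun j => ⟨α j, (hα j).1, hSstep j⟩, hVmax⟩
  refine ⟨fun Sstar Vstar ⟨φ, hφ, hconv⟩ => h.isCWMin_of_tendsto hlam hX hφ hconv,
    h.antitone_Fobj hlam.le hX, ?_⟩
  obtain ⟨Sstar, Vstar, φ, hφ, hconv⟩ := h.exists_tendsto_subseq hlam hX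
  exact ⟨Sstar, Vstar, h.isCWMin_of_tendsto hlam hX hφ hconv,
    h.tendsto_Fobj_of_tendsto hlam.le hX hφ hconv⟩

/-- Theorem 7: global convergence of the inexact algorithm 𝒜′ to coordinatewise minima. -/
theorem stmt7 {m n p k : ℕ} (lam : ℝ) (hlam : 0 < lam) (hk : 1 ≤ k) (hkn : k ≤ n)
    (Y : Matrix (Fin m) (Fin n) ℝ) (X : Matrix (Fin m) (Fin p) ℝ)
    -- spectral norm `‖X‖₂ ≤ 1`
    (hX : ∀ v : Fin p → ℝ, ∑ i, (X.mulVec v i) ^ 2 ≤ ∑ i, (v i) ^ 2)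
    (M : ℕ) (hM : 1 ≤ M)
    (S : ℕ → Matrix (Fin p) (Fin k) ℝ) (V : ℕ → Matrix (Fin n) (Fin k) ℝ)
    (hV : ∀ j, IsOrthCol (V j))
    (α : ℕ → ℕ) (hα : ∀ j, 1 ≤ α j ∧ α j ≤ M)
    (hSstep : ∀ j, S (j + 1) = (Tmap Y X lam (V j))^[α j] (S j))
    (hVmax : ∀ j, ∀ V' : Matrix (Fin n) (Fin k) ℝ, IsOrthCol V' →
      ((Yᵀ * X * S (j + 1))ᵀ * V').trace ≤ ((Yᵀ * X * S (j + 1))ᵀ * V (j + 1)).trace) :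
    (∀ (Sstar : Matrix (Fin p) (Fin k) ℝ) (Vstar : Matrix (Fin n) (Fin k) ℝ),
      (∃ φ : ℕ → ℕ, StrictMono φ ∧
        Tendsto (fun l => (S (φ l), V (φ l))) atTop (𝓝 (Sstar, Vstar))) →
      IsCWMin Y X lam Sstar Vstar) ∧
    Antitone (fun j => Fobj Y X lam (S j) (V j)) ∧
    ∃ (Sstar : Matrix (Fin p) (Fin k) ℝ) (Vstar : Matrix (Fin n) (Fin k) ℝ),
      IsCWMin Y X lam Sstar Vstar ∧
      Tendsto (fun j => Fobj Y X lam (S j) (V j)) atTop (𝓝 (Fobj Y X lam Sstar Vstar)) :=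
  stmt7_general lam hlam Y X hX M S V hV α hα hSstep hVmax
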